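/- arXiv:1901.01652 — 2 statements merged into one kernel-verified Lean document; each statement's English description precedes it below -/
import Mathlib

section
/- The second mode-n unfolding of a tensor-ring-represented tensor factorizes as X_{<n>} = G_{n,(2)} (G_{≠n,<2>})ᵀ, where G_{≠n} is the subchain tensor obtained by merging all cores except the n-th. -/
/-!
Pad every core slice with zeros to an `R × R` matrix, `R ≥ max rₙ`. Padding is multiplicative
and preserves traces, and the padded slices all live in one matrix ring, so the index casts of
the dependent chain product disappear. Both sides of the identity then become the trace of a
cyclic product of padded slices, starting at the first core on the left and at core `n` on the
right, and these agree by `trace (A * B) = trace (B * A)`.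
-/

open Matrix
open Fin.NatCast

variable {N : ℕ}

/-- Product `A k * A (k+1) * ⋯ * A (k+m-1)` of cyclically-indexed rectangular matrices
`A n ∈ ℝ^{R n × R (n+1)}` (indices mod `N`, so that `R (N+1) = R 1`). -/
def chainFrom [NeZero N] (r : Fin N → ℕ)
    (A : (n : Fin N) → Matrix (Fin (r n)) (Fin (r (n + 1))) ℝ) (k : Fin N) :
    (m : ℕ) → Matrix (Fin (r k)) (Fin (r (k + (m : Fin N)))) ℝ
  | 0 => (1 : Matrix (Fin (r k)) (Fin (r k)) ℝ).submatrix id (Fin.cast (congrArg r (by simp)))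
  | m + 1 => ((chainFrom r A k m) * A (k + (m : Fin N))).submatrix id
      (Fin.cast (congrArg r (by open Fin.CommRing in (push_cast; ring))))

/-- Trace of the full cyclic chain product `A k * A (k+1) * ⋯ * A (k+N-1)`. -/
def trChainAt [NeZero N] (r : Fin N → ℕ)
    (A : (n : Fin N) → Matrix (Fin (r n)) (Fin (r (n + 1))) ℝ) (k : Fin N) : ℝ :=
  ∑ i : Fin (r k), chainFrom r A k N i (Fin.cast (congrArg r (by simp)) i)

/-- The tensor represented by a tensor-ring decomposition with cores `G`:
`X(i₁,…,i_N) = Trace (G₁(i₁) ⋯ G_N(i_N))`. -/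
def TRtensor (I : Fin N → ℕ) [NeZero N] (r : Fin N → ℕ)
    (G : (n : Fin N) → Fin (I n) → Matrix (Fin (r n)) (Fin (r (n + 1))) ℝ)
    (idx : ∀ n, Fin (I n)) : ℝ :=
  trChainAt r (fun n => G n (idx n)) 0

section ZeroPad
variable {α : Type*} {a b c : ℕ} {R : ℕ}

lemma Fin.sum_univ_eq_sum_castLE [AddCommMonoid α] (h : a ≤ R) (f : Fin R → α)
    (hf : ∀ i : Fin R, a ≤ i → f i = 0) : ∑ i, f i = ∑ i : Fin a, f (i.castLE h) :=
  (Fintype.sum_of_injective _ (Fin.castLE_injective h) _ _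
    (fun i hi => hf i (by simpa [Fin.castLE, Fin.ext_iff] using hi)) fun _ => rfl).symm

variable (R) in
def zeroPad [Zero α] (M : Matrix (Fin a) (Fin b) α) : Matrix (Fin R) (Fin R) α :=
  Matrix.of fun i j => if h : (i : ℕ) < a ∧ (j : ℕ) < b then M ⟨i, h.1⟩ ⟨j, h.2⟩ else 0

lemma zeroPad_submatrix_cast [Zero α] {b' : ℕ} (M : Matrix (Fin a) (Fin b) α) (h : b' = b) :
    zeroPad R (M.submatrix id (Fin.cast h)) = zeroPad R M := by
  subst h; rfl

lemma zeroPad_mul [NonUnitalNonAssocSemiring α] (hb : b ≤ R)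
    (M : Matrix (Fin a) (Fin b) α) (P : Matrix (Fin b) (Fin c) α) :
    zeroPad R (M * P) = zeroPad R M * zeroPad R P := by
  ext i j
  rw [mul_apply,
    Fin.sum_univ_eq_sum_castLE hb _ fun y hy => by simp [zeroPad, not_lt.2 hy]]
  by_cases hij : (i : ℕ) < a ∧ (j : ℕ) < c
  · simp [zeroPad, hij, mul_apply]
  · simp only [zeroPad, of_apply, hij, dite_false]
    refine (Finset.sum_eq_zero fun y _ => ?_).symm
    rcases not_and_or.1 hij with hi | hj <;> simp [*]

lemma trace_zeroPad [AddCommMonoid α] (ha : a ≤ R) (M : Matrix (Fin a) (Fin a) α) :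
    trace (zeroPad R M) = trace M := by
  rw [trace, Fin.sum_univ_eq_sum_castLE ha _ fun i hi => by simp [zeroPad, not_lt.2 hi]]
  simp [zeroPad, trace]

end ZeroPad

section PaddedChain
open Fin.CommRing
variable [NeZero N] {R : ℕ} (r : Fin N → ℕ)
  (A : (n : Fin N) → Matrix (Fin (r n)) (Fin (r (n + 1))) ℝ)

variable (R) in
def paddedChain (k : Fin N) (m : ℕ) : Matrix (Fin R) (Fin R) ℝ :=
  ((List.range m).map fun j : ℕ => zeroPad R (A (k + j))).prod

lemma paddedChain_succ (k : Fin N) (m : ℕ) :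
    paddedChain R r A k (m + 1) = paddedChain R r A k m * zeroPad R (A (k + m)) :=
  List.prod_range_succ _ _

lemma paddedChain_succ' (k : Fin N) (m : ℕ) :
    paddedChain R r A k (m + 1) = zeroPad R (A k) * paddedChain R r A (k + 1) m := by
  rw [paddedChain, paddedChain, List.prod_range_succ', Nat.cast_zero, add_zero]
  congr 3 with j
  rw [show k + ((j + 1 : ℕ) : Fin N) = k + 1 + j by push_cast; ring]

lemma trace_paddedChain_add_one (k : Fin N) {m : ℕ} (hm : (m : Fin N) = 0) :
    trace (paddedChain R r A k m) = trace (paddedChain R r A (k + 1) m) := by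
  cases m with
  | zero => rfl
  | succ m =>
    have hk : k + 1 + (m : Fin N) = k := by
      rw [add_assoc, add_comm (1 : Fin N), ← Nat.cast_add_one, hm, add_zero]
    rw [paddedChain_succ', paddedChain_succ, trace_mul_comm, hk]

lemma trace_paddedChain_zero_eq (k : Fin N) :
    trace (paddedChain R r A 0 N) = trace (paddedChain R r A k N) := by
  have key (j : ℕ) : trace (paddedChain R r A 0 N) = trace (paddedChain R r A j N) := by
    induction j with
    | zero => simp
    | succ j ih =>
      rw [ih, trace_paddedChain_add_one r A _ (Fin.natCast_self N), Nat.cast_succ]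
  simpa using key k

variable {r}

lemma zeroPad_chainFrom (hR : ∀ k, r k ≤ R) (k : Fin N) (m : ℕ) :
    zeroPad R (chainFrom r A k m)
      = zeroPad R (1 : Matrix (Fin (r k)) (Fin (r k)) ℝ) * paddedChain R r A k m := by
  induction m with
  | zero => simp [chainFrom, zeroPad_submatrix_cast, paddedChain]
  | succ m ih =>
    rw [chainFrom, zeroPad_submatrix_cast, zeroPad_mul (hR _), ih, paddedChain_succ, mul_assoc]

lemma zeroPad_one_mul_paddedChain (hR : ∀ k, r k ≤ R) (k : Fin N) {m : ℕ} (hm : m ≠ 0) :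
    zeroPad R (1 : Matrix (Fin (r k)) (Fin (r k)) ℝ) * paddedChain R r A k m
      = paddedChain R r A k m := by
  obtain ⟨m, rfl⟩ := Nat.exists_eq_succ_of_ne_zero hm
  rw [paddedChain_succ', ← mul_assoc, ← zeroPad_mul (hR k), Matrix.one_mul]

lemma trChainAt_eq_trace_paddedChain (hR : ∀ k, r k ≤ R) (k : Fin N) :
    trChainAt r A k = trace (paddedChain R r A k N) := by
  calc trChainAt r A k
      = trace ((chainFrom r A k N).submatrix id (Fin.cast (congrArg r (by simp)))) := rfl
    _ = trace (paddedChain R r A k N) := by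
      rw [← trace_zeroPad (hR k), zeroPad_submatrix_cast, zeroPad_chainFrom A hR,
        zeroPad_one_mul_paddedChain A hR k (NeZero.ne N)]

lemma sum_mul_chainFrom_eq_trace_paddedChain (hR : ∀ k, r k ≤ R) (k : Fin N) (m : ℕ)
    (h : r k = r (k + 1 + (m : Fin N))) :
    ∑ a : Fin (r k), ∑ b : Fin (r (k + 1)), A k a b * chainFrom r A (k + 1) m b (Fin.cast h a)
      = trace (paddedChain R r A k (m + 1)) := by
  calc _ = trace (A k * (chainFrom r A (k + 1) m).submatrix id (Fin.cast h)) := rfl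
    _ = trace (paddedChain R r A k (m + 1)) := by
      rw [← trace_zeroPad (hR k), zeroPad_mul (hR _), zeroPad_submatrix_cast,
        zeroPad_chainFrom A hR, ← mul_assoc, ← zeroPad_mul (hR _), Matrix.mul_one,
        paddedChain_succ']

end PaddedChain

/-- the second mode-`n` unfolding of a TR-represented tensor factorizes as
`X_{<n>} = G_{n,(2)} (G_{≠n,<2>})ᵀ`: entrywise, `X(i₁,…,i_N)` equals the sum over
`(a,b) ∈ Fin Rₙ × Fin R_{n+1}` of `Gₙ(iₙ)(a,b)` times the `(b,a)` entry of the subchain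
`G_{n+1}(i_{n+1}) ⋯ G_{n-1}(i_{n-1})`. -/
theorem tr_second_unfolding [NeZero N] (I r : Fin N → ℕ)
    (G : (n : Fin N) → Fin (I n) → Matrix (Fin (r n)) (Fin (r (n + 1))) ℝ)
    (n : Fin N) (idx : ∀ m, Fin (I m)) :
    TRtensor I r G idx
      = ∑ a : Fin (r n), ∑ b : Fin (r (n + 1)),
          G n (idx n) a b *
            chainFrom r (fun m => G m (idx m)) (n + 1) (N - 1) b
              (Fin.cast (congrArg r (by
                have hN : ((N - 1 : ℕ) : Fin N) + 1 = 0 := by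
                  have h1 : (1 : Fin N) = ((1 : ℕ) : Fin N) := by simp
                  rw [h1, ← Nat.cast_add,
                    show N - 1 + 1 = N from Nat.succ_pred_eq_of_pos (Nat.pos_of_neZero N),
                    Fin.natCast_self]
                have : n + 1 + ((N - 1 : ℕ) : Fin N) = n := by
                  rw [add_assoc, add_comm (1 : Fin N), hN, add_zero]
                exact this.symm)) a) := by
  have hR (k : Fin N) : r k ≤ ∑ j, r j :=
    Finset.single_le_sum (fun _ _ => Nat.zero_le _) (Finset.mem_univ k)
  set A := fun m => G m (idx m)
  calc TRtensor I r G idx = trace (paddedChain _ r A n N) := by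
        rw [TRtensor, trChainAt_eq_trace_paddedChain _ hR, trace_paddedChain_zero_eq]
    _ = trace (paddedChain _ r A n (N - 1 + 1)) := by rw [Nat.sub_one_add_one (NeZero.ne N)]
    _ = _ := (sum_mul_chainFrom_eq_trace_paddedChain A hR n (N - 1) _).symm
end

section
/- If P = X ×₁ Q₁Q₁ᵀ ×₂ ⋯ ×_N Q_NQ_Nᵀ where each Qₙ has orthonormal columns, then ‖X − P‖_F² ≤ Σₙ ‖X ×ₙ (I − QₙQₙᵀ)‖_F², i.e., the multilinear projection error is bounded by the sum of the single-mode projection errors. -/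
open Matrix

variable {N : ℕ}

/-- Mode-`n` product of a tensor `X ∈ ℝ^{I₁×⋯×I_N}` with a matrix `A ∈ ℝ^{J×Iₙ}`:
`(X ×ₙ A)(i₁,…,j,…,i_N) = Σ_{iₙ} A(j,iₙ) X(i₁,…,iₙ,…,i_N)`. -/
def modeProd {I : Fin N → ℕ} (X : (∀ n, Fin (I n)) → ℝ) (n : Fin N) {J : ℕ}
    (A : Matrix (Fin J) (Fin (I n)) ℝ) :
    (∀ m, Fin (Function.update I n J m)) → ℝ :=
  fun idx => ∑ i : Fin (I n),
    A (Fin.cast (by simp) (idx n)) i *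
      X (fun m => if h : m = n then Fin.cast (congrArg I h).symm i
        else Fin.cast (by simp [Function.update_of_ne h]) (idx m))

/-- Frobenius norm of a tensor: `‖X‖_F = sqrt (Σ X(i₁,…,i_N)²)`. -/
noncomputable def froT {I : Fin N → ℕ} (X : (∀ n, Fin (I n)) → ℝ) : ℝ :=
  Real.sqrt (∑ idx : ∀ n, Fin (I n), (X idx) ^ 2)

/-- Multilinear (all-modes) product `Y ×₁ Q₁ ×₂ ⋯ ×_N Q_N`:
`(Y ×₁ Q₁ ⋯ ×_N Q_N)(i₁,…,i_N) = Σ_{j₁,…,j_N} (∏ₙ Qₙ(iₙ,jₙ)) Y(j₁,…,j_N)`. -/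
def allModeProd {K I : Fin N → ℕ} (Y : (∀ n, Fin (K n)) → ℝ)
    (Q : (n : Fin N) → Matrix (Fin (I n)) (Fin (K n)) ℝ) :
    (∀ n, Fin (I n)) → ℝ :=
  fun idx => ∑ j : ∀ n, Fin (K n), (∏ n, Q n (idx n) (j n)) * Y j

/-! Write `Pₙ = QₙQₙᵀ`, an orthogonal projection. Replacing the factors by `Pₙ` one mode at a
time telescopes `X - X ×₁ P₁ ⋯ ×_N P_N` into `∑ₙ Tₙ` with
`Tₙ = X ×₁ P₁ ⋯ ×ₙ₋₁ Pₙ₋₁ ×ₙ (I - Pₙ)`. For `a < b`, the terms `T_a` and `T_b` carry `I - P_a` and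
`P_a` in mode `a`, so they are orthogonal and their squared norms add up. Finally `Tₙ` is
`X ×ₙ (I - Pₙ)` followed by orthogonal projections in the other modes, which cannot increase the
Frobenius norm. -/

open Function

section Multilinear

variable {I J K : Fin N → ℕ}

theorem allModeProd_mul (X : (∀ n, Fin (K n)) → ℝ)
    (A : ∀ n, Matrix (Fin (I n)) (Fin (J n)) ℝ) (B : ∀ n, Matrix (Fin (J n)) (Fin (K n)) ℝ) :
    allModeProd X (fun n => A n * B n) = allModeProd (allModeProd X B) A := by
  funext idx
  simp only [allModeProd, Finset.mul_sum]
  rw [Finset.sum_comm]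
  refine Finset.sum_congr rfl fun k _ => ?_
  simp only [Matrix.mul_apply, Finset.prod_univ_sum]
  rw [Finset.sum_mul]
  refine Finset.sum_congr rfl fun j _ => ?_
  rw [Finset.prod_mul_distrib]
  ring

theorem allModeProd_one (X : (∀ n, Fin (I n)) → ℝ) :
    allModeProd X (fun n => (1 : Matrix (Fin (I n)) (Fin (I n)) ℝ)) = X := by
  funext idx
  rw [allModeProd, Fintype.sum_eq_single idx]
  · simp
  · intro j hj
    obtain ⟨m, hm⟩ : ∃ m, idx m ≠ j m := by
      by_contra! h
      exact hj (funext h).symm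
    rw [Finset.prod_eq_zero (Finset.mem_univ m) (by simp [hm]), zero_mul]

theorem allModeProd_eq_zero_of_eq_zero (X : (∀ n, Fin (K n)) → ℝ)
    {A : ∀ n, Matrix (Fin (I n)) (Fin (K n)) ℝ} {k : Fin N} (hk : A k = 0) :
    allModeProd X A = 0 := by
  funext idx
  simp [allModeProd, Finset.prod_eq_zero (Finset.mem_univ k), hk]

theorem allModeProd_update_sub (X : (∀ n, Fin (K n)) → ℝ)
    (A : ∀ n, Matrix (Fin (I n)) (Fin (K n)) ℝ) (k : Fin N)
    (B C : Matrix (Fin (I k)) (Fin (K k)) ℝ) :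
    allModeProd X (update A k (B - C)) =
      allModeProd X (update A k B) - allModeProd X (update A k C) := by
  funext idx
  simp only [allModeProd, Pi.sub_apply, ← Finset.sum_sub_distrib, ← sub_mul]
  refine Finset.sum_congr rfl fun j _ => ?_
  simp only [apply_update (fun m (M : Matrix (Fin (I m)) (Fin (K m)) ℝ) => M (idx m) (j m)),
    Finset.prod_update_of_mem (Finset.mem_univ k), Matrix.sub_apply]
  ring

theorem allModeProd_dotProduct (X : (∀ n, Fin (K n)) → ℝ)
    (A : ∀ n, Matrix (Fin (I n)) (Fin (K n)) ℝ) (Y : (∀ n, Fin (I n)) → ℝ) :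
    allModeProd X A ⬝ᵥ Y = X ⬝ᵥ allModeProd Y (fun n => (A n)ᵀ) := by
  simp only [dotProduct, allModeProd, Finset.sum_mul, Finset.mul_sum]
  rw [Finset.sum_comm]
  refine Finset.sum_congr rfl fun j _ => Finset.sum_congr rfl fun idx _ => ?_
  simp only [Matrix.transpose_apply]
  ring

theorem allModeProd_dotProduct_allModeProd (X : (∀ n, Fin (K n)) → ℝ)
    (A B : ∀ n, Matrix (Fin (I n)) (Fin (K n)) ℝ) :
    allModeProd X A ⬝ᵥ allModeProd X B = X ⬝ᵥ allModeProd X (fun n => (A n)ᵀ * B n) := by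
  rw [allModeProd_dotProduct, allModeProd_mul]

theorem allModeProd_update_one_apply (X : (∀ n, Fin (I n)) → ℝ) (n : Fin N)
    (A : Matrix (Fin (I n)) (Fin (I n)) ℝ) (idx : ∀ m, Fin (I m)) :
    allModeProd X (update (fun m => (1 : Matrix (Fin (I m)) (Fin (I m)) ℝ)) n A) idx =
      ∑ i, A (idx n) i * X (update idx n i) := by
  refine (Fintype.sum_of_injective (update idx n) (update_injective idx n) _ _ ?_ ?_).symm
  · rintro j hj
    obtain ⟨m, hmn, hm⟩ : ∃ m ≠ n, idx m ≠ j m := by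
      by_contra! h
      exact hj ⟨j n, funext fun m => by
        by_cases hmn : m = n
        · subst hmn; simp
        · simp [hmn, h m hmn]⟩
    rw [Finset.prod_eq_zero (Finset.mem_univ m), zero_mul]
    simp [hmn, hm]
  · intro i
    rw [Finset.prod_eq_single n]
    · simp
    · intro m _ hmn
      simp [hmn]
    · simp

theorem allModeProd_dotProduct_allModeProd_eq_zero (X : (∀ n, Fin (K n)) → ℝ)
    {A B : ∀ n, Matrix (Fin (I n)) (Fin (K n)) ℝ} {k : Fin N} (hk : (A k)ᵀ * B k = 0) :
    allModeProd X A ⬝ᵥ allModeProd X B = 0 := by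
  rw [allModeProd_dotProduct_allModeProd, allModeProd_eq_zero_of_eq_zero X (k := k) hk,
    dotProduct_zero]

end Multilinear

theorem Matrix.isStarProjection_mul_conjTranspose {m n R : Type*} [Fintype m] [Fintype n]
    [DecidableEq n] [CommRing R] [StarRing R] {Q : Matrix m n R} (hQ : Qᴴ * Q = 1) :
    IsStarProjection (Q * Qᴴ) where
  isIdempotentElem := by
    rw [IsIdempotentElem, Matrix.mul_assoc, ← Matrix.mul_assoc Qᴴ, hQ, Matrix.one_mul]
  isSelfAdjoint := by
    simp [IsSelfAdjoint, Matrix.star_eq_conjTranspose, Matrix.conjTranspose_mul]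

theorem sum_dotProduct_sum_of_pairwise {ι α R : Type*} [Fintype ι] [Fintype α]
    [NonUnitalNonAssocSemiring R] (v : ι → α → R) (h : Pairwise fun i j => v i ⬝ᵥ v j = 0) :
    (∑ i, v i) ⬝ᵥ (∑ i, v i) = ∑ i, v i ⬝ᵥ v i := by
  rw [sum_dotProduct]
  refine Finset.sum_congr rfl fun i _ => ?_
  rw [dotProduct_sum, Finset.sum_eq_single i (fun j _ hji => h hji.symm) (by simp)]

section Frobenius

variable {I : Fin N → ℕ}

theorem froT_sq (f : (∀ n, Fin (I n)) → ℝ) : froT f ^ 2 = f ⬝ᵥ f := by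
  rw [froT, Real.sq_sqrt (Fintype.sum_nonneg fun _ => sq_nonneg _)]
  simp only [dotProduct, sq]

theorem froT_congr {I' : Fin N → ℕ} (h : I = I') (f : (∀ n, Fin (I n)) → ℝ)
    (g : (∀ n, Fin (I' n)) → ℝ) (hfg : ∀ idx, f idx = g fun m => Fin.cast (congrFun h m) (idx m)) :
    froT f = froT g := by
  subst h
  simp only [Fin.cast_eq_self] at hfg
  rw [funext hfg]

-- `modeProd X n A` is indexed by `update I n (I n)`, which equals `I` only propositionally.
theorem froT_modeProd (X : (∀ n, Fin (I n)) → ℝ) (n : Fin N)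
    (A : Matrix (Fin (I n)) (Fin (I n)) ℝ) :
    froT (modeProd X n A) =
      froT (allModeProd X (update (fun m => (1 : Matrix (Fin (I m)) (Fin (I m)) ℝ)) n A)) := by
  refine (froT_congr (update_eq_self n I).symm _ _ fun idx => ?_).symm
  rw [allModeProd_update_one_apply, modeProd]
  simp only [Fin.cast_cast, Fin.cast_eq_self]
  congr! with i _ m
  by_cases h : m = n
  · subst h; simp
  · simp [h]

theorem dotProduct_allModeProd_self_le (X : (∀ n, Fin (I n)) → ℝ)
    {P : ∀ n, Matrix (Fin (I n)) (Fin (I n)) ℝ} (hP : ∀ n, IsStarProjection (P n)) :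
    allModeProd X P ⬝ᵥ allModeProd X P ≤ X ⬝ᵥ X := by
  set Y := allModeProd X P
  have hY : Y ⬝ᵥ Y = X ⬝ᵥ Y := by
    rw [allModeProd_dotProduct_allModeProd]
    congr 2
    funext n
    rw [(Matrix.isHermitian_iff_isSymm.mp (hP n).isSelfAdjoint).eq, (hP n).isIdempotentElem.eq]
  have hnonneg : 0 ≤ (X - Y) ⬝ᵥ (X - Y) := Fintype.sum_nonneg fun _ => mul_self_nonneg _
  rw [sub_dotProduct, dotProduct_sub, dotProduct_sub, dotProduct_comm Y X] at hnonneg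
  linarith

end Frobenius

section Telescoping

variable {I : Fin N → ℕ} (P : ∀ n, Matrix (Fin (I n)) (Fin (I n)) ℝ)

def firstModes (k : ℕ) (m : Fin N) : Matrix (Fin (I m)) (Fin (I m)) ℝ :=
  if (m : ℕ) < k then P m else 1

def telescopeTerm (X : (∀ n, Fin (I n)) → ℝ) (n : Fin N) : (∀ n, Fin (I n)) → ℝ :=
  allModeProd X (update (firstModes P n) n (1 - P n))

theorem update_firstModes_one (n : Fin N) : update (firstModes P n) n 1 = firstModes P n := by
  simp [firstModes]

theorem update_firstModes_self (n : Fin N) :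
    update (firstModes P n) n (P n) = firstModes P ((n : ℕ) + 1) := by
  funext m
  by_cases h : m = n
  · subst h; simp [firstModes]
  · have : (m : ℕ) ≠ n := Fin.val_ne_of_ne h
    simp only [update_of_ne h, firstModes, Nat.lt_succ_iff_lt_or_eq, this, or_false]

theorem firstModes_zero : firstModes P 0 = fun _ => 1 := by
  funext m
  simp [firstModes]

theorem firstModes_self : firstModes P N = P := by
  funext m
  simp [firstModes]

theorem isStarProjection_firstModes (hP : ∀ n, IsStarProjection (P n)) (k : ℕ) (m : Fin N) :
    IsStarProjection (firstModes P k m) := by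
  unfold firstModes
  split_ifs
  exacts [hP m, .one _]

theorem sub_allModeProd_eq_sum_telescopeTerm (X : (∀ n, Fin (I n)) → ℝ) :
    X - allModeProd X P = ∑ n, telescopeTerm P X n := by
  have hstep : ∀ n : Fin N, telescopeTerm P X n =
      allModeProd X (firstModes P n) - allModeProd X (firstModes P ((n : ℕ) + 1)) := fun n => by
    rw [telescopeTerm, allModeProd_update_sub, update_firstModes_one, update_firstModes_self]
  rw [Finset.sum_congr rfl fun n _ => hstep n,
    Fin.sum_univ_eq_sum_range (fun k => allModeProd X (firstModes P k) -
      allModeProd X (firstModes P (k + 1))), Finset.sum_range_sub', firstModes_zero,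
    allModeProd_one, firstModes_self]

variable {P}

theorem telescopeTerm_dotProduct_eq_zero (hP : ∀ n, IsStarProjection (P n))
    (X : (∀ n, Fin (I n)) → ℝ) {a b : Fin N} (hab : a ≠ b) :
    telescopeTerm P X a ⬝ᵥ telescopeTerm P X b = 0 := by
  have horth {a b : Fin N} (hab : a < b) : telescopeTerm P X a ⬝ᵥ telescopeTerm P X b = 0 := by
    refine allModeProd_dotProduct_allModeProd_eq_zero X (k := a) ?_
    rw [update_self, update_of_ne hab.ne, firstModes, if_pos (Fin.lt_def.mp hab),
      (Matrix.isHermitian_iff_isSymm.mp (hP a).one_sub.isSelfAdjoint).eq,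
      (hP a).one_sub_mul_self]
  rcases hab.lt_or_gt with hab | hab
  · exact horth hab
  · rw [dotProduct_comm]
    exact horth hab

theorem telescopeTerm_dotProduct_self_le (hP : ∀ n, IsStarProjection (P n))
    (X : (∀ n, Fin (I n)) → ℝ) (n : Fin N) :
    telescopeTerm P X n ⬝ᵥ telescopeTerm P X n ≤ froT (modeProd X n (1 - P n)) ^ 2 := by
  have hfactor : update (firstModes P n) n (1 - P n) =
      fun m => firstModes P n m *
        update (fun m => (1 : Matrix (Fin (I m)) (Fin (I m)) ℝ)) n (1 - P n) m := by
    funext m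
    by_cases h : m = n
    · subst h; simp [firstModes]
    · simp [h]
  rw [froT_modeProd, froT_sq, telescopeTerm, hfactor, allModeProd_mul]
  exact dotProduct_allModeProd_self_le _ (isStarProjection_firstModes P hP n)

end Telescoping

/-- for the multilinear projection `P = X ×₁ Q₁Q₁ᵀ ⋯ ×_N Q_NQ_Nᵀ` with
each `Qₙ` having orthonormal columns, the projection error is bounded by the sum of the
single-mode projection errors: `‖X − P‖_F² ≤ Σₙ ‖X ×ₙ (I − QₙQₙᵀ)‖_F²`. -/
theorem trp_error_bound {I K : Fin N → ℕ} (X : (∀ n, Fin (I n)) → ℝ)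
    (Q : (n : Fin N) → Matrix (Fin (I n)) (Fin (K n)) ℝ)
    (hQ : ∀ n, (Q n)ᵀ * Q n = 1) :
    (froT (fun idx => X idx - allModeProd X (fun n => Q n * (Q n)ᵀ) idx)) ^ 2
      ≤ ∑ n : Fin N, (froT (modeProd X n (1 - Q n * (Q n)ᵀ))) ^ 2 := by
  have hP : ∀ n, IsStarProjection (Q n * (Q n)ᵀ) := fun n => by
    simpa only [Matrix.conjTranspose_eq_transpose_of_trivial] using
      Matrix.isStarProjection_mul_conjTranspose (Q := Q n) (by simpa using hQ n)
  calc froT (X - allModeProd X fun n => Q n * (Q n)ᵀ) ^ 2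
      = ∑ n, telescopeTerm _ X n ⬝ᵥ telescopeTerm _ X n := by
        rw [froT_sq, sub_allModeProd_eq_sum_telescopeTerm,
          sum_dotProduct_sum_of_pairwise _ fun a b => telescopeTerm_dotProduct_eq_zero hP X]
    _ ≤ _ := Finset.sum_le_sum fun n _ => telescopeTerm_dotProduct_self_le hP X n
end
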